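/- Let R be a finite Frobenius ring with generating character chi. Define chi* on the quaternion ring H_{a,b}(R) by chi*(x_0 + x_1 i + x_2 j + x_3 k) = chi(x_0). Then chi* is an additive character of H_{a,b}(R) whose kernel contains no nonzero left ideals; i.e., chi* is a generating character. -/

import Mathlib

/-!
If `x` lies in a left ideal on which `χ ∘ re` is trivial, then so does `r • (q * x)` for all
`r : R` and quaternions `q`, so `χ` is trivial on the ideal `R · re (q * x)` and hence
`re (q * x) = 0`. Taking `q = 1, i, j, k` recovers the coordinates of `x` up to the units
`1, a, b, -ab`.
-/

open scoped Quaternion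

theorem AddChar.eq_zero_of_forall_mul_eq_one {R M : Type*} [Semiring R] [Monoid M]
    {χ : AddChar R M} (hχ : ∀ I : Ideal R, (∀ x ∈ I, χ x = 1) → I = ⊥) {y : R}
    (hy : ∀ r, χ (r * y) = 1) : y = 0 := by
  have hspan : Ideal.span {y} = ⊥ := hχ _ fun x hx => by
    obtain ⟨r, rfl⟩ := Ideal.mem_span_singleton'.mp hx
    exact hy r
  simpa only [Ideal.span_singleton_eq_bot] using hspan

theorem AddChar.ideal_eq_bot_of_compLinearMap {R A M : Type*} [CommRing R] [Ring A]
    [Algebra R A] [Monoid M] {χ : AddChar R M} (hχ : ∀ I : Ideal R, (∀ x ∈ I, χ x = 1) → I = ⊥)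
    (f : A →ₗ[R] R) (hf : ∀ x : A, (∀ q, f (q * x) = 0) → x = 0) (I : Ideal A)
    (hI : ∀ x ∈ I, χ (f x) = 1) : I = ⊥ := by
  refine (Submodule.eq_bot_iff I).mpr fun x hx => hf x fun q => ?_
  refine χ.eq_zero_of_forall_mul_eq_one hχ fun r => ?_
  rw [← smul_eq_mul, ← f.map_smul, ← smul_mul_assoc]
  exact hI _ (I.mul_mem_left _ hx)

namespace QuaternionAlgebra

variable {R : Type*} [CommRing R] {c₁ c₂ c₃ : R}

theorem eq_zero_of_forall_re_mul_eq_zero (hc₁ : IsUnit c₁) (hc₃ : IsUnit c₃)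
    {x : ℍ[R, c₁, c₂, c₃]} (hx : ∀ q : ℍ[R, c₁, c₂, c₃], (q * x).re = 0) : x = 0 := by
  have h₀ := hx 1
  have hI := hx ⟨0, 1, 0, 0⟩
  have hJ := hx ⟨0, 0, 1, 0⟩
  have hK := hx ⟨0, 0, 0, 1⟩
  simp only [one_mul, re_mul, zero_mul, mul_zero, mul_one, add_zero, zero_add, zero_sub,
    sub_zero, neg_eq_zero] at h₀ hI hJ hK
  have hx₄ : x.imK = 0 := ((hc₁.mul hc₃).mul_right_eq_zero).mp hK
  rw [hx₄, mul_zero, add_zero] at hJ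
  ext
  exacts [h₀, hc₁.mul_right_eq_zero.mp hI, hc₃.mul_right_eq_zero.mp hJ, hx₄]

end QuaternionAlgebra

theorem quaternion_generating_character_general (R : Type) [CommRing R] (a b : Rˣ)
    (χ : AddChar R Circle) (hχ : ∀ I : Ideal R, (∀ x ∈ I, χ x = 1) → I = ⊥) :
    ∃ χs : AddChar ℍ[R, (a : R), (b : R)] Circle,
      (∀ x : ℍ[R, (a : R), (b : R)], χs x = χ x.re) ∧
      ∀ I : Ideal ℍ[R, (a : R), (b : R)], (∀ x ∈ I, χs x = 1) → I = ⊥ :=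
  ⟨χ.compAddMonoidHom (QuaternionAlgebra.reₗ _ _ _).toAddMonoidHom, fun _ => rfl,
    χ.ideal_eq_bot_of_compLinearMap hχ (QuaternionAlgebra.reₗ _ _ _)
      (fun _ => QuaternionAlgebra.eq_zero_of_forall_re_mul_eq_zero a.isUnit b.isUnit)⟩

/-- If `χ` is a generating character of the finite Frobenius ring `R`, then
`χ*(x₀ + x₁ i + x₂ j + x₃ k) = χ(x₀)` defines an additive character of the quaternion
ring `H_{a,b}(R)` whose kernel contains no nonzero left ideals, i.e. a generating
character. -/
theorem quaternion_generating_character (R : Type) [CommRing R] [Fintype R] (a b : Rˣ)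
    (χ : AddChar R Circle) (hχ : ∀ I : Ideal R, (∀ x ∈ I, χ x = 1) → I = ⊥) :
    ∃ χs : AddChar ℍ[R, (a : R), (b : R)] Circle,
      (∀ x : ℍ[R, (a : R), (b : R)], χs x = χ x.re) ∧
      ∀ I : Ideal ℍ[R, (a : R), (b : R)], (∀ x ∈ I, χs x = 1) → I = ⊥ :=
  quaternion_generating_character_general R a b χ hχ
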